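/- Let N be a finite set and w : Finset N → ℝ with w(∅) = 0 and w(S) ≤ w(N) for every S ⊆ N, and let U = U(w) be the core polytope. Define the water-filling sequence by π^1 = 0, A^1 = N, and inductively, while A^t ≠ ∅: Δ^t = max{Δ ≥ 0 : π^t + Δ·1_{A^t} ∈ U}, π^{t+1} = π^t + Δ^t·1_{A^t}, and A^{t+1} = {i ∈ A^t : there exists π' ∈ U with π'_j ≥ π^{t+1}_j for all j ∈ N and π'_i > π^{t+1}_i}. Then A^{t+1} is a strict subset of A^t whenever A^t ≠ ∅, so there is a first index T ≤ |N| + 1 with A^T = ∅, and π^T is the unique leximin-optimal element of U. -/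

import Mathlib

/-- The vector `x` sorted in nondecreasing order. -/
noncomputable def sortVec {n : ℕ} (x : Fin n → ℝ) : Fin n → ℝ := x ∘ Tuple.sort x

/-- `x` leximin-dominates `y`. -/
def LexDom {n : ℕ} (x y : Fin n → ℝ) : Prop :=
  ∃ k : Fin n, (∀ j : Fin n, j < k → sortVec x j = sortVec y j) ∧ sortVec y k < sortVec x k

/-- The core polytope of a coalition value function `w` with `w ∅ = 0`. -/
def CorePoly {n : ℕ} (w : Finset (Fin n) → ℝ) : Set (Fin n → ℝ) :=
  {π | (∀ i, 0 ≤ π i) ∧ ∀ S : Finset (Fin n), ∑ i ∈ Finset.univ \ S, π i ≤ w Finset.univ - w S}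

/-!
Each round raises all active coordinates to a common level and deactivates those that cannot be
raised further. If no coordinate were deactivated, averaging the witnesses of raisability (the
core is convex) would allow a larger raise, so the active sets strictly decrease. A coordinate
deactivated in a round lies outside a coalition `S` that is tight at the current point and whose
complement contains no active coordinate, so its value is final.

Optimality is proved round by round. Suppose `ρ` in the core agrees with the output `x` on the
coordinates deactivated before a round, and is no worse on that many smallest sorted values. All
values of `x` below the level `c` of the round sit on those coordinates, so `ρ j < c` for a
coordinate `j` deactivated in this round would give `ρ` more values below `c` than `x`. Hence
`x ≤ ρ` outside the tight coalition of `j`, and tightness forces `ρ = x` there. This rules out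
leximin domination of `x`, and shows that a leximin-optimal `ρ`, having the same sorted values as
`x`, equals `x`.
-/

open Finset

section Sorting

variable {n : ℕ}

theorem Monotone.apply_iff_lt_card_filter {α : Type*} [Preorder α] {u : Fin n → α}
    (hu : Monotone u) {Q : α → Prop} [DecidablePred Q] (hQ : Antitone Q) (m : Fin n) :
    Q (u m) ↔ (m : ℕ) < #{p | Q (u p)} := by
  constructor
  · intro hm
    have hsub : Iic m ⊆ ({p | Q (u p)} : Finset (Fin n)) := fun p hp =>
      mem_filter.2 ⟨mem_univ p, hQ (hu (mem_Iic.1 hp)) hm⟩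
    have := card_le_card hsub
    rw [Fin.card_Iic] at this
    omega
  · intro hm
    by_contra hQm
    have hsub : ({p | Q (u p)} : Finset (Fin n)) ⊆ Iio m := fun p hp =>
      mem_Iio.2 (lt_of_not_ge fun hmp => hQm (hQ (hu hmp) (mem_filter.1 hp).2))
    have := card_le_card hsub
    rw [Fin.card_Iio] at this
    omega

theorem card_filter_sortVec (x : Fin n → ℝ) (Q : ℝ → Prop) [DecidablePred Q] :
    #{p | Q (sortVec x p)} = #{i | Q (x i)} :=
  card_equiv (Tuple.sort x) fun p => by
    simp only [mem_filter, mem_univ, true_and]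
    rfl

theorem sortVec_lt_iff (x : Fin n → ℝ) (c : ℝ) (m : Fin n) :
    sortVec x m < c ↔ (m : ℕ) < #{i | x i < c} := by
  rw [← card_filter_sortVec x (· < c)]
  exact (Tuple.monotone_sort x).apply_iff_lt_card_filter (Q := (· < c))
    (fun _ _ hab hb => lt_of_le_of_lt hab hb) m

theorem sortVec_le_iff (x : Fin n → ℝ) (c : ℝ) (m : Fin n) :
    sortVec x m ≤ c ↔ (m : ℕ) < #{i | x i ≤ c} := by
  rw [← card_filter_sortVec x (· ≤ c)]
  exact (Tuple.monotone_sort x).apply_iff_lt_card_filter (Q := (· ≤ c))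
    (fun _ _ hab hb => le_trans hab hb) m

theorem lexDom_or_lexDom_of_sortVec_ne {x y : Fin n → ℝ} (h : sortVec x ≠ sortVec y) :
    LexDom x y ∨ LexDom y x := by
  obtain ⟨k, hk, hmin⟩ :=
    wellFounded_lt.has_min {j | sortVec x j ≠ sortVec y j} (Function.ne_iff.1 h)
  have hpre : ∀ j < k, sortVec x j = sortVec y j := fun j hj =>
    not_not.1 fun hne => hmin j hne hj
  rcases lt_or_gt_of_ne hk with hlt | hgt
  · exact Or.inr ⟨k, fun j hj => (hpre j hj).symm, hlt⟩
  · exact Or.inl ⟨k, hpre, hgt⟩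

end Sorting

theorem exists_le_and_lt_succ {α : Type*} [LinearOrder α] (f : ℕ → α) {a : α} {T : ℕ}
    (h0 : f 0 ≤ a) (hT : a < f T) : ∃ t < T, f t ≤ a ∧ a < f (t + 1) := by
  induction T with
  | zero => exact absurd hT (not_lt.2 h0)
  | succ T ih =>
    by_cases ha : a < f T
    · obtain ⟨t, ht, hft⟩ := ih ha
      exact ⟨t, by omega, hft⟩
    · exact ⟨T, by omega, not_lt.1 ha, hT⟩

theorem exists_eq_empty_of_ssubset_succ {α : Type*} {s : ℕ → Finset α}
    (h : ∀ t, (s t).Nonempty → s (t + 1) ⊂ s t) :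
    ∃ T ≤ #(s 0), s T = ∅ ∧ ∀ t < T, (s t).Nonempty := by
  classical
  have hcard : ∀ t, (∀ u < t, (s u).Nonempty) → #(s t) + t ≤ #(s 0) := by
    intro t
    induction t with
    | zero => simp
    | succ t ih =>
      intro hne
      have := card_lt_card (h t (hne t t.lt_succ_self))
      have := ih fun u hu => hne u (by omega)
      omega
  have hex : ∃ T, s T = ∅ := by
    by_contra! hne
    have := hcard (#(s 0) + 1) fun u _ => hne u
    omega
  have hmin : ∀ t < Nat.find hex, (s t).Nonempty := fun t ht =>
    nonempty_iff_ne_empty.2 (Nat.find_min hex ht)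
  have := hcard _ hmin
  exact ⟨Nat.find hex, by omega, Nat.find_spec hex, hmin⟩

theorem Convex.exists_forall_lt_of_forall_exists_lt {ι : Type*} {s : Set (ι → ℝ)}
    (hs : Convex ℝ s) {x : ι → ℝ} (hx : x ∈ s) (B : Finset ι)
    (h : ∀ i ∈ B, ∃ y ∈ s, x ≤ y ∧ x i < y i) : ∃ y ∈ s, x ≤ y ∧ ∀ i ∈ B, x i < y i := by
  classical
  induction B using Finset.induction_on with
  | empty => exact ⟨x, hx, le_rfl, by simp⟩
  | insert i B _ ih =>
    obtain ⟨y₁, hy₁, hxy₁, hlt₁⟩ := ih fun j hj => h j (mem_insert_of_mem hj)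
    obtain ⟨y₂, hy₂, hxy₂, hlt₂⟩ := h i (mem_insert_self i B)
    refine ⟨(1 / 2 : ℝ) • y₁ + (1 / 2 : ℝ) • y₂,
      hs hy₁ hy₂ (by norm_num) (by norm_num) (by norm_num), fun j => ?_, fun j hj => ?_⟩
    · simp only [Pi.add_apply, Pi.smul_apply, smul_eq_mul]
      linarith [hxy₁ j, hxy₂ j]
    · simp only [Pi.add_apply, Pi.smul_apply, smul_eq_mul]
      rcases mem_insert.1 hj with rfl | hj
      · linarith [hxy₁ j]
      · linarith [hlt₁ j hj, hxy₂ j]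

section Core

variable {n : ℕ} {w : Finset (Fin n) → ℝ}

theorem zero_mem_corePoly (hle : ∀ S, w S ≤ w univ) : (0 : Fin n → ℝ) ∈ CorePoly w :=
  ⟨fun _ => le_rfl, fun S => by simpa using hle S⟩

theorem mem_corePoly_of_le {x y : Fin n → ℝ} (hy : y ∈ CorePoly w) (hx : 0 ≤ x) (hxy : x ≤ y) :
    x ∈ CorePoly w :=
  ⟨hx, fun S => (sum_le_sum fun i _ => hxy i).trans (hy.2 S)⟩

theorem convex_corePoly : Convex ℝ (CorePoly w) := by
  intro x hx y hy a b ha hb hab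
  refine ⟨fun i => ?_, fun S => ?_⟩
  · have := hx.1 i
    have := hy.1 i
    simp only [Pi.add_apply, Pi.smul_apply, smul_eq_mul]
    positivity
  · simp only [Pi.add_apply, Pi.smul_apply, smul_eq_mul]
    rw [sum_add_distrib, ← mul_sum, ← mul_sum]
    calc a * ∑ i ∈ univ \ S, x i + b * ∑ i ∈ univ \ S, y i
        ≤ a * (w univ - w S) + b * (w univ - w S) :=
          add_le_add (mul_le_mul_of_nonneg_left (hx.2 S) ha)
            (mul_le_mul_of_nonneg_left (hy.2 S) hb)
      _ = w univ - w S := by rw [← add_mul, hab, one_mul]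

def Raisable (w : Finset (Fin n) → ℝ) (x : Fin n → ℝ) (i : Fin n) : Prop :=
  ∃ y ∈ CorePoly w, x ≤ y ∧ x i < y i

theorem apply_eq_of_sum_eq {x y : Fin n → ℝ} {S : Finset (Fin n)} (hy : y ∈ CorePoly w)
    (hxy : ∀ i ∈ univ \ S, x i ≤ y i) (hS : ∑ i ∈ univ \ S, x i = w univ - w S) :
    ∀ i ∈ univ \ S, y i = x i := fun i hi =>
  ((sum_eq_sum_iff_of_le hxy).1 (le_antisymm (sum_le_sum hxy) (hS ▸ hy.2 S)) i hi).symm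

theorem not_raisable_of_sum_eq {x : Fin n → ℝ} {S : Finset (Fin n)}
    (hS : ∑ i ∈ univ \ S, x i = w univ - w S) {i : Fin n} (hi : i ∈ univ \ S) :
    ¬ Raisable w x i := by
  rintro ⟨y, hy, hxy, hlt⟩
  exact hlt.ne' (apply_eq_of_sum_eq hy (fun j _ => hxy j) hS i hi)

theorem exists_sum_eq_of_not_raisable {x : Fin n → ℝ} (hx : x ∈ CorePoly w) {j : Fin n}
    (hj : ¬ Raisable w x j) : ∃ S, j ∉ S ∧ ∑ i ∈ univ \ S, x i = w univ - w S := by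
  obtain ⟨S, hS, hmin⟩ := exists_min_image ({S | j ∉ S} : Finset (Finset (Fin n)))
    (fun S => w univ - w S - ∑ i ∈ univ \ S, x i) ⟨∅, by simp⟩
  refine ⟨S, (mem_filter.1 hS).2, ?_⟩
  by_contra hne
  set ε := w univ - w S - ∑ i ∈ univ \ S, x i
  have hε : 0 < ε := lt_of_le_of_ne (by linarith [hx.2 S]) fun h => hne (by linarith)
  refine hj ⟨x + Pi.single j ε, ⟨fun i => ?_, fun S' => ?_⟩, ?_, by simp [hε]⟩
  · exact add_nonneg (hx.1 i) (by rw [Pi.single_apply]; split_ifs <;> linarith)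
  · rw [Pi.add_def, sum_add_distrib, sum_pi_single']
    split_ifs with hjS'
    · linarith [hmin S' (mem_filter.2 ⟨mem_univ _, (mem_sdiff.1 hjS').2⟩)]
    · simpa using hx.2 S'
  · exact le_add_of_nonneg_right (Pi.single_nonneg.2 hε.le)

end Core

section WaterFilling

variable {n : ℕ} {w : Finset (Fin n) → ℝ}

def IsWaterFillingStep (w : Finset (Fin n) → ℝ) (x : Fin n → ℝ) (B : Finset (Fin n))
    (x' : Fin n → ℝ) (B' : Finset (Fin n)) : Prop :=
  (∃ d, IsGreatest {d : ℝ | 0 ≤ d ∧ (fun i => x i + if i ∈ B then d else 0) ∈ CorePoly w} d ∧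
      x' = fun i => x i + if i ∈ B then d else 0) ∧
    ∀ i, i ∈ B' ↔ i ∈ B ∧ Raisable w x' i

namespace IsWaterFillingStep

variable {x x' : Fin n → ℝ} {B B' : Finset (Fin n)}

theorem mem_corePoly (h : IsWaterFillingStep w x B x' B') : x' ∈ CorePoly w := by
  obtain ⟨⟨d, hd, rfl⟩, -⟩ := h
  exact hd.1.2

theorem le (h : IsWaterFillingStep w x B x' B') : x ≤ x' := by
  obtain ⟨⟨d, hd, rfl⟩, -⟩ := h
  intro i
  dsimp only
  split_ifs <;> linarith [hd.1.1]

theorem apply_of_notMem (h : IsWaterFillingStep w x B x' B') {i : Fin n} (hi : i ∉ B) :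
    x' i = x i := by
  obtain ⟨⟨d, -, rfl⟩, -⟩ := h
  simp [hi]

theorem subset (h : IsWaterFillingStep w x B x' B') : B' ⊆ B := fun i hi => ((h.2 i).1 hi).1

theorem apply_le_of_mem (h : IsWaterFillingStep w x B x' B') (hx : ∀ i, ∀ j ∈ B, x i ≤ x j) :
    ∀ i, ∀ j ∈ B, x' i ≤ x' j := by
  obtain ⟨⟨d, hd, rfl⟩, -⟩ := h
  intro i j hj
  have := hx i j hj
  simp only [hj, if_true]
  split_ifs <;> linarith [hd.1.1]

theorem ssubset (h : IsWaterFillingStep w x B x' B') (hB : B.Nonempty) : B' ⊂ B := by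
  refine Finset.ssubset_iff_subset_ne.2 ⟨h.subset, fun hBB => ?_⟩
  have hraise : ∀ i ∈ B, Raisable w x' i := fun i hi => ((h.2 i).1 (hBB ▸ hi)).2
  obtain ⟨y, hy, hx'y, hlt⟩ :=
    convex_corePoly.exists_forall_lt_of_forall_exists_lt h.mem_corePoly B hraise
  obtain ⟨i₀, hi₀, hmin⟩ := exists_min_image B (fun i => y i - x' i) hB
  have hx'0 := h.mem_corePoly.1
  obtain ⟨⟨d, hd, hx'⟩, -⟩ := h
  set ε := y i₀ - x' i₀
  have hε : 0 < ε := sub_pos.2 (hlt i₀ hi₀)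
  have hraised : ∀ i, (x i + if i ∈ B then d + ε else 0) = x' i + if i ∈ B then ε else 0 := by
    intro i
    simp only [hx']
    split_ifs <;> ring
  suffices d + ε ∈ {d : ℝ | 0 ≤ d ∧ (fun i => x i + if i ∈ B then d else 0) ∈ CorePoly w} by
    linarith [hd.2 this]
  refine ⟨by linarith [hd.1.1], mem_corePoly_of_le hy (fun i => ?_) (fun i => ?_)⟩
  · change 0 ≤ x i + if i ∈ B then d + ε else 0
    rw [hraised]
    have := hx'0 i
    split_ifs <;> linarith
  · change x i + (if i ∈ B then d + ε else 0) ≤ y i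
    rw [hraised]
    split_ifs with hi
    · linarith [hmin i hi]
    · linarith [hx'y i]

end IsWaterFillingStep

structure IsWaterFilling (w : Finset (Fin n) → ℝ) (x : ℕ → Fin n → ℝ) (B : ℕ → Finset (Fin n))
    (T : ℕ) : Prop where
  init : x 0 = 0
  init_active : B 0 = univ
  step : ∀ t < T, IsWaterFillingStep w (x t) (B t) (x (t + 1)) (B (t + 1))
  nonempty : ∀ t < T, (B t).Nonempty
  terminal : B T = ∅

namespace IsWaterFilling

variable {x : ℕ → Fin n → ℝ} {B : ℕ → Finset (Fin n)} {T : ℕ}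

theorem mem_corePoly (h : IsWaterFilling w x B T) (hle : ∀ S, w S ≤ w univ) :
    x T ∈ CorePoly w := by
  cases T with
  | zero => exact h.init ▸ zero_mem_corePoly hle
  | succ T => exact (h.step T T.lt_succ_self).mem_corePoly

theorem subset_of_le (h : IsWaterFilling w x B T) {s t : ℕ} (hst : s ≤ t) (ht : t ≤ T) :
    B t ⊆ B s := by
  induction t, hst using Nat.le_induction with
  | base => exact subset_rfl
  | succ t hst ih => exact (h.step t ht).subset.trans (ih (by omega))

theorem mono (h : IsWaterFilling w x B T) {s t : ℕ} (hst : s ≤ t) (ht : t ≤ T) :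
    x s ≤ x t := by
  induction t, hst using Nat.le_induction with
  | base => exact le_rfl
  | succ t hst ih => exact (ih (by omega)).trans (h.step t ht).le

theorem apply_eq_of_notMem (h : IsWaterFilling w x B T) {s t : ℕ} (hst : s ≤ t) (ht : t ≤ T)
    {i : Fin n} (hi : i ∉ B s) : x t i = x s i := by
  induction t, hst using Nat.le_induction with
  | base => rfl
  | succ t hst ih =>
    rw [(h.step t ht).apply_of_notMem fun hit => hi (h.subset_of_le hst (by omega) hit)]
    exact ih (by omega)

theorem apply_le_of_mem (h : IsWaterFilling w x B T) {t : ℕ} (ht : t ≤ T) :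
    ∀ i, ∀ j ∈ B t, x t i ≤ x t j := by
  induction t with
  | zero => simp [h.init]
  | succ t ih =>
    exact fun i j hj => (h.step t ht).apply_le_of_mem (ih (by omega)) i j ((h.step t ht).subset hj)

theorem apply_succ_le (h : IsWaterFilling w x B T) {t : ℕ} (ht : t < T) (i : Fin n)
    {j : Fin n} (hj : j ∈ B t) : x (t + 1) i ≤ x (t + 1) j :=
  (h.step t ht).apply_le_of_mem (h.apply_le_of_mem ht.le) i j hj

theorem apply_le_of_notMem_succ (h : IsWaterFilling w x B T) {t : ℕ} (ht : t < T)
    {i j : Fin n} (hi : i ∉ B (t + 1)) (hj : j ∈ B t) : x T i ≤ x T j := by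
  rw [h.apply_eq_of_notMem ht le_rfl hi]
  exact (h.apply_succ_le ht i hj).trans (h.mono ht le_rfl j)

theorem notMem_of_apply_lt (h : IsWaterFilling w x B T) {t : ℕ} (ht : t < T) {i j : Fin n}
    (hj : j ∉ B (t + 1)) (hij : x T i < x T j) : i ∉ B t := by
  intro hi
  have := h.apply_eq_of_notMem ht le_rfl hj
  have := h.apply_succ_le ht j hi
  have := h.mono ht le_rfl i
  linarith

theorem exists_sum_eq (h : IsWaterFilling w x B T) {t : ℕ} (ht : t < T) {j : Fin n}
    (hj : j ∈ B t) (hj' : j ∉ B (t + 1)) :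
    ∃ S, j ∉ S ∧ (∀ i ∈ univ \ S, i ∉ B (t + 1)) ∧ ∑ i ∈ univ \ S, x T i = w univ - w S := by
  have hstep := h.step t ht
  obtain ⟨S, hjS, hS⟩ := exists_sum_eq_of_not_raisable hstep.mem_corePoly
    fun hr => hj' ((hstep.2 j).2 ⟨hj, hr⟩)
  have hfrozen : ∀ i ∈ univ \ S, i ∉ B (t + 1) := fun i hi hi' =>
    not_raisable_of_sum_eq hS hi ((hstep.2 i).1 hi').2
  refine ⟨S, hjS, hfrozen, ?_⟩
  rw [← hS]
  exact sum_congr rfl fun i hi => h.apply_eq_of_notMem ht le_rfl (hfrozen i hi)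

theorem card_compl_lt (h : IsWaterFilling w x B T) {t : ℕ} (ht : t < T) :
    #(B t)ᶜ < #(B (t + 1))ᶜ :=
  card_lt_card (compl_ssubset_compl.2 ((h.step t ht).ssubset (h.nonempty t ht)))

section Leximin

variable {ρ : Fin n → ℝ} {t : ℕ}

theorem apply_le_of_eqOn_compl (h : IsWaterFilling w x B T) (ht : t < T)
    (hF : ∀ i ∉ B t, ρ i = x T i)
    (hdom : ∀ m : Fin n, (m : ℕ) ≤ #(B t)ᶜ → sortVec (x T) m ≤ sortVec ρ m) :
    ∀ i ∉ B (t + 1), x T i ≤ ρ i := by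
  intro j hj'
  by_cases hj : j ∈ B t
  swap
  · exact (hF j hj).ge
  by_contra! hlt
  have hsub : ({i | x T i < x T j} : Finset (Fin n)) ⊆ (B t)ᶜ := fun i hi =>
    mem_compl.2 (h.notMem_of_apply_lt ht hj' (mem_filter.1 hi).2)
  have hss : ({i | x T i < x T j} : Finset (Fin n)) ⊂ ({i | ρ i < x T j} : Finset (Fin n)) := by
    refine (ssubset_iff_of_subset fun i hi => ?_).2 ⟨j, by simpa using hlt, by simp⟩
    rw [mem_filter] at hi ⊢
    rw [hF i (mem_compl.1 (hsub (mem_filter.2 hi)))]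
    exact hi
  have hm : #{i | x T i < x T j} < n :=
    (card_lt_card hss).trans_le ((card_le_univ _).trans_eq (Fintype.card_fin n))
  have hρm := (sortVec_lt_iff ρ _ ⟨_, hm⟩).2 (card_lt_card hss)
  have hxm := (sortVec_lt_iff (x T) _ ⟨_, hm⟩).not.2 (lt_irrefl _)
  have := hdom ⟨_, hm⟩ (card_le_card hsub)
  linarith [not_lt.1 hxm]

theorem eqOn_compl_succ (h : IsWaterFilling w x B T) (ht : t < T) (hρ : ρ ∈ CorePoly w)
    (hF : ∀ i ∉ B t, ρ i = x T i)
    (hdom : ∀ m : Fin n, (m : ℕ) ≤ #(B t)ᶜ → sortVec (x T) m ≤ sortVec ρ m) :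
    ∀ i ∉ B (t + 1), ρ i = x T i := by
  intro j hj'
  by_cases hj : j ∈ B t
  · obtain ⟨S, hjS, hfrozen, hS⟩ := h.exists_sum_eq ht hj hj'
    exact apply_eq_of_sum_eq hρ
      (fun i hi => h.apply_le_of_eqOn_compl ht hF hdom i (hfrozen i hi)) hS j (by simpa using hjS)
  · exact hF j hj

theorem eqOn_compl (h : IsWaterFilling w x B T) (ht : t ≤ T) (hρ : ρ ∈ CorePoly w)
    (hdom : ∀ m : Fin n, (m : ℕ) < #(B t)ᶜ → sortVec (x T) m ≤ sortVec ρ m) :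
    ∀ i ∉ B t, ρ i = x T i := by
  induction t with
  | zero => simp [h.init_active]
  | succ t ih =>
    have := h.card_compl_lt ht
    exact h.eqOn_compl_succ ht hρ (ih (by omega) fun m hm => hdom m (by omega))
      fun m hm => hdom m (by omega)

theorem not_lexDom (h : IsWaterFilling w x B T) (hρ : ρ ∈ CorePoly w) : ¬ LexDom ρ (x T) := by
  rintro ⟨k, hpre, hk⟩
  obtain ⟨t, ht, hkt, hkt'⟩ := exists_le_and_lt_succ (fun t => #(B t)ᶜ) (a := (k : ℕ)) (T := T)
    (by simp [h.init_active]) (by simp [h.terminal])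
  have hdom : ∀ m : Fin n, (m : ℕ) ≤ #(B t)ᶜ → sortVec (x T) m ≤ sortVec ρ m := by
    intro m hm
    rcases (Fin.le_iff_val_le_val.2 (hm.trans hkt)).lt_or_eq with hmk | rfl
    · exact (hpre m hmk).ge
    · exact hk.le
  have hF := h.eqOn_compl_succ ht hρ (h.eqOn_compl ht.le hρ fun m hm => hdom m hm.le) hdom
  obtain ⟨j, hj, hj'⟩ := not_subset.1 fun hsub : B t ⊆ B (t + 1) =>
    (card_le_card (compl_subset_compl.2 hsub)).not_gt (hkt.trans_lt hkt')
  have hρk : sortVec ρ k ≤ x T j := (sortVec_le_iff ρ _ k).2 <| hkt'.trans_le <|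
    card_le_card fun i hi => by
      rw [mem_compl] at hi
      rw [mem_filter, hF i hi]
      exact ⟨mem_univ _, h.apply_le_of_notMem_succ ht hi hj⟩
  have hxk : ¬ sortVec (x T) k < x T j := fun hlt =>
    ((sortVec_lt_iff _ _ k).1 hlt).not_ge <| (card_le_card fun i hi =>
      mem_compl.2 (h.notMem_of_apply_lt ht hj' (mem_filter.1 hi).2)).trans hkt
  linarith [not_lt.1 hxk]

theorem eq_of_forall_not_lexDom (h : IsWaterFilling w x B T) (hle : ∀ S, w S ≤ w univ)
    (hρ : ρ ∈ CorePoly w) (hopt : ∀ y ∈ CorePoly w, ¬ LexDom y ρ) : ρ = x T := by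
  have hsort : sortVec ρ = sortVec (x T) := by
    by_contra hne
    exact (lexDom_or_lexDom_of_sortVec_ne hne).elim (h.not_lexDom hρ)
      (hopt _ (h.mem_corePoly hle))
  funext i
  exact h.eqOn_compl le_rfl hρ (fun m _ => (congrFun hsort m).ge) i (by simp [h.terminal])

end Leximin

end IsWaterFilling

end WaterFilling

theorem water_filling_correct_general (n : ℕ) (w : Finset (Fin n) → ℝ)
    (hle : ∀ S : Finset (Fin n), w S ≤ w Finset.univ)
    (π : ℕ → Fin n → ℝ) (A : ℕ → Finset (Fin n)) (Δ : ℕ → ℝ)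
    (hπ1 : π 1 = 0) (hA1 : A 1 = Finset.univ)
    (hstep : ∀ t, 1 ≤ t → (A t).Nonempty →
      IsGreatest {d : ℝ | 0 ≤ d ∧ (fun i => π t i + if i ∈ A t then d else 0) ∈ CorePoly w}
        (Δ t) ∧
      π (t + 1) = (fun i => π t i + if i ∈ A t then Δ t else 0) ∧
      A (t + 1) =
        @Finset.filter _
          (fun i => ∃ π' ∈ CorePoly w, (∀ j, π (t + 1) j ≤ π' j) ∧ π (t + 1) i < π' i)
          (Classical.decPred _) (A t)) :
    (∀ t, 1 ≤ t → (A t).Nonempty → A (t + 1) ⊂ A t) ∧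
    ∃ T, 1 ≤ T ∧ T ≤ n + 1 ∧ A T = ∅ ∧ (∀ t, 1 ≤ t → t < T → (A t).Nonempty) ∧
      (π T ∈ CorePoly w ∧ ∀ π' ∈ CorePoly w, ¬ LexDom π' (π T)) ∧
      ∀ ρ : Fin n → ℝ,
        (ρ ∈ CorePoly w ∧ ∀ π' ∈ CorePoly w, ¬ LexDom π' ρ) → ρ = π T := by
  have hsteps : ∀ t, 1 ≤ t → (A t).Nonempty →
      IsWaterFillingStep w (π t) (A t) (π (t + 1)) (A (t + 1)) := by
    classical
    intro t ht hA
    obtain ⟨hΔ, hπ, hA'⟩ := hstep t ht hA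
    exact ⟨⟨Δ t, hΔ, hπ⟩, fun i => by rw [hA']; exact mem_filter⟩
  have hssubset : ∀ t, 1 ≤ t → (A t).Nonempty → A (t + 1) ⊂ A t := fun t ht hA =>
    (hsteps t ht hA).ssubset hA
  obtain ⟨T, hTn, hT, hne⟩ := exists_eq_empty_of_ssubset_succ (s := fun t => A (t + 1))
    fun t => hssubset (t + 1) (by omega)
  have hwf : IsWaterFilling w (fun t => π (t + 1)) (fun t => A (t + 1)) T :=
    ⟨hπ1, hA1, fun t ht => hsteps (t + 1) (by omega) (hne t ht), hne, hT⟩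
  refine ⟨hssubset, T + 1, by omega, by simpa [hA1] using hTn, hT, fun t h1 h2 => ?_,
    ⟨hwf.mem_corePoly hle, fun y hy => hwf.not_lexDom hy⟩,
    fun ρ ⟨hρ, hopt⟩ => hwf.eq_of_forall_not_lexDom hle hρ hopt⟩
  obtain ⟨s, rfl⟩ := Nat.exists_eq_add_of_le' h1
  exact hne s (by omega)

/-- Correctness of the water-filling algorithm: the active sets strictly decrease,
the algorithm terminates after at most `|N| + 1` steps, and it returns the unique
leximin-optimal element of the core polytope. -/
theorem water_filling_correct (n : ℕ) (w : Finset (Fin n) → ℝ) (h0 : w ∅ = 0)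
    (hle : ∀ S : Finset (Fin n), w S ≤ w Finset.univ)
    (π : ℕ → Fin n → ℝ) (A : ℕ → Finset (Fin n)) (Δ : ℕ → ℝ)
    (hπ1 : π 1 = 0) (hA1 : A 1 = Finset.univ)
    (hstep : ∀ t, 1 ≤ t → (A t).Nonempty →
      IsGreatest {d : ℝ | 0 ≤ d ∧ (fun i => π t i + if i ∈ A t then d else 0) ∈ CorePoly w}
        (Δ t) ∧
      π (t + 1) = (fun i => π t i + if i ∈ A t then Δ t else 0) ∧
      A (t + 1) =
        @Finset.filter _
          (fun i => ∃ π' ∈ CorePoly w, (∀ j, π (t + 1) j ≤ π' j) ∧ π (t + 1) i < π' i)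
          (Classical.decPred _) (A t)) :
    (∀ t, 1 ≤ t → (A t).Nonempty → A (t + 1) ⊂ A t) ∧
    ∃ T, 1 ≤ T ∧ T ≤ n + 1 ∧ A T = ∅ ∧ (∀ t, 1 ≤ t → t < T → (A t).Nonempty) ∧
      (π T ∈ CorePoly w ∧ ∀ π' ∈ CorePoly w, ¬ LexDom π' (π T)) ∧
      ∀ ρ : Fin n → ℝ,
        (ρ ∈ CorePoly w ∧ ∀ π' ∈ CorePoly w, ¬ LexDom π' ρ) → ρ = π T :=
  water_filling_correct_general n w hle π A Δ hπ1 hA1 hstep
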